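/- If H_2 and H_3 are two orthogonal planes in ℝ³ (i.e., their normal vectors are orthogonal), then it is impossible that both H_2 and H_3 each intersect the set {(t, t², t³) : t > 0} in at least 3 points. -/

import Mathlib

open scoped InnerProductSpace

/-- The moment curve in `ℝ³`: `γ(t) = (t, t², t³)`. -/
noncomputable def momentCurve3 : ℝ → EuclideanSpace ℝ (Fin 3) :=
  fun t => WithLp.toLp 2 (fun i : Fin 3 => t ^ ((i : ℕ) + 1))

lemma cubic_sign (a b d c t₁ t₂ t₃ : ℝ)
    (h1 : 0 < t₁) (h2 : 0 < t₂) (h3 : 0 < t₃)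
    (n12 : t₁ ≠ t₂) (n13 : t₁ ≠ t₃) (n23 : t₂ ≠ t₃)
    (e1 : d * t₁ ^ 3 + b * t₁ ^ 2 + a * t₁ = c)
    (e2 : d * t₂ ^ 3 + b * t₂ ^ 2 + a * t₂ = c)
    (e3 : d * t₃ ^ 3 + b * t₃ ^ 2 + a * t₃ = c)
    (hne : ¬ (a = 0 ∧ b = 0 ∧ d = 0)) :
    d ≠ 0 ∧ ∃ p q : ℝ, 0 < p ∧ 0 < q ∧ a = d * p ∧ b = -(d * q) := by
  have E12 : d * (t₁ ^ 2 + t₁ * t₂ + t₂ ^ 2) + b * (t₁ + t₂) + a = 0 := by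
    have h : (t₁ - t₂) * (d * (t₁ ^ 2 + t₁ * t₂ + t₂ ^ 2) + b * (t₁ + t₂) + a) = 0 := by
      linear_combination e1 - e2
    rcases mul_eq_zero.mp h with h | h
    · exact absurd (sub_eq_zero.mp h) n12
    · exact h
  have E13 : d * (t₁ ^ 2 + t₁ * t₃ + t₃ ^ 2) + b * (t₁ + t₃) + a = 0 := by
    have h : (t₁ - t₃) * (d * (t₁ ^ 2 + t₁ * t₃ + t₃ ^ 2) + b * (t₁ + t₃) + a) = 0 := by
      linear_combination e1 - e3
    rcases mul_eq_zero.mp h with h | h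
    · exact absurd (sub_eq_zero.mp h) n13
    · exact h
  have F : d * (t₁ + t₂ + t₃) + b = 0 := by
    have h : (t₂ - t₃) * (d * (t₁ + t₂ + t₃) + b) = 0 := by
      linear_combination E12 - E13
    rcases mul_eq_zero.mp h with h | h
    · exact absurd (sub_eq_zero.mp h) n23
    · exact h
  have ha : a = d * (t₁ * t₂ + t₁ * t₃ + t₂ * t₃) := by
    linear_combination E12 - (t₁ + t₂) * F
  have hb : b = -(d * (t₁ + t₂ + t₃)) := by linarith
  have hd : d ≠ 0 := by
    intro h0
    apply hne
    refine ⟨?_, ?_, h0⟩ <;> simp [ha, hb, h0]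
  exact ⟨hd, t₁ * t₂ + t₁ * t₃ + t₂ * t₃, t₁ + t₂ + t₃, by positivity, by positivity, ha, hb⟩

lemma normal_sign (u : EuclideanSpace ℝ (Fin 3)) (c : ℝ) (hu : ‖u‖ = 1)
    (h : ∃ x y z, x ∈ momentCurve3 '' Set.Ioi (0 : ℝ) ∩ {w | ⟪w, u⟫_ℝ = c} ∧
          y ∈ momentCurve3 '' Set.Ioi (0 : ℝ) ∩ {w | ⟪w, u⟫_ℝ = c} ∧
          z ∈ momentCurve3 '' Set.Ioi (0 : ℝ) ∩ {w | ⟪w, u⟫_ℝ = c} ∧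
          x ≠ y ∧ x ≠ z ∧ y ≠ z) :
    u 2 ≠ 0 ∧ ∃ p q : ℝ, 0 < p ∧ 0 < q ∧ u 0 = u 2 * p ∧ u 1 = -(u 2 * q) := by
  obtain ⟨x, y, z, ⟨⟨t₁, ht₁, rfl⟩, hx⟩, ⟨⟨t₂, ht₂, rfl⟩, hy⟩, ⟨⟨t₃, ht₃, rfl⟩, hz⟩,
    nxy, nxz, nyz⟩ := h
  have inj : ∀ s t : ℝ, s = t → momentCurve3 s = momentCurve3 t := fun s t h => by rw [h]
  have n12 : t₁ ≠ t₂ := fun h => nxy (inj _ _ h)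
  have n13 : t₁ ≠ t₃ := fun h => nxz (inj _ _ h)
  have n23 : t₂ ≠ t₃ := fun h => nyz (inj _ _ h)
  have key : ∀ t : ℝ, ⟪momentCurve3 t, u⟫_ℝ = u 2 * t ^ 3 + u 1 * t ^ 2 + u 0 * t := by
    intro t
    simp [PiLp.inner_apply, momentCurve3, Fin.sum_univ_three, RCLike.inner_apply]
    ring
  rw [Set.mem_setOf_eq, key] at hx hy hz
  have hne : ¬ (u 0 = 0 ∧ u 1 = 0 ∧ u 2 = 0) := by
    rintro ⟨h0, h1, h2⟩
    have : u = 0 := by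
      ext i
      fin_cases i <;> simpa
    rw [this] at hu
    simp at hu
  exact cubic_sign (u 0) (u 1) (u 2) c t₁ t₂ t₃ ht₁ ht₂ ht₃ n12 n13 n23 hx hy hz hne

/-- Two orthogonal planes in `ℝ³` cannot both meet the positive part
`{(t, t², t³) : t > 0}` of the moment curve in at least three points each. -/
theorem not_both_orthogonal_planes_meet_curve_thrice
    (u₂ u₃ : EuclideanSpace ℝ (Fin 3)) (c₂ c₃ : ℝ)
    (hu₂ : ‖u₂‖ = 1) (hu₃ : ‖u₃‖ = 1) (horth : ⟪u₂, u₃⟫_ℝ = 0) :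
    ¬ ((∃ x y z, x ∈ momentCurve3 '' Set.Ioi (0 : ℝ) ∩ {w | ⟪w, u₂⟫_ℝ = c₂} ∧
          y ∈ momentCurve3 '' Set.Ioi (0 : ℝ) ∩ {w | ⟪w, u₂⟫_ℝ = c₂} ∧
          z ∈ momentCurve3 '' Set.Ioi (0 : ℝ) ∩ {w | ⟪w, u₂⟫_ℝ = c₂} ∧
          x ≠ y ∧ x ≠ z ∧ y ≠ z) ∧
        (∃ x y z, x ∈ momentCurve3 '' Set.Ioi (0 : ℝ) ∩ {w | ⟪w, u₃⟫_ℝ = c₃} ∧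
          y ∈ momentCurve3 '' Set.Ioi (0 : ℝ) ∩ {w | ⟪w, u₃⟫_ℝ = c₃} ∧
          z ∈ momentCurve3 '' Set.Ioi (0 : ℝ) ∩ {w | ⟪w, u₃⟫_ℝ = c₃} ∧
          x ≠ y ∧ x ≠ z ∧ y ≠ z)) := by
  rintro ⟨h2, h3⟩
  obtain ⟨d2, p2, q2, hp2, hq2, ha2, hb2⟩ := normal_sign u₂ c₂ hu₂ h2
  obtain ⟨d3, p3, q3, hp3, hq3, ha3, hb3⟩ := normal_sign u₃ c₃ hu₃ h3
  have hin : ⟪u₂, u₃⟫_ℝ = u₂ 0 * u₃ 0 + u₂ 1 * u₃ 1 + u₂ 2 * u₃ 2 := by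
    simp [PiLp.inner_apply, Fin.sum_univ_three, RCLike.inner_apply]
    ring
  rw [hin, ha2, hb2, ha3, hb3] at horth
  have hK : (0:ℝ) < p2 * p3 + q2 * q3 + 1 := by positivity
  have : u₂ 2 * u₃ 2 * (p2 * p3 + q2 * q3 + 1) = 0 := by linear_combination horth
  rcases mul_eq_zero.mp this with h | h
  · rcases mul_eq_zero.mp h with h | h
    exacts [d2 h, d3 h]
  · exact absurd h (ne_of_gt hK)
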